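/- arXiv:2309.14555 — 4 statements merged into one kernel-verified Lean document; each statement's English description precedes it below -/
import Mathlib

section
/- Let k ≥ 1, λ ≥ 0 with β = λ·(k−1) > 1. Consider the deterministic sequence σ of n candidates in ℝ^k where the t-th candidate has value β^(⌈t/k⌉−1) in coordinate (t mod k) and 0 elsewhere. If the biased gambler selects the first candidate of any 'row' i (i.e., candidate at index (i−1)·k+1 for i ≥ 2), their utility ‖σ^(t)‖₁ − λ·(‖s^(t)‖₁ − ‖σ^(t)‖₁) equals 0, where s^(t) is the coordinate-wise maximum of all candidates up to time t. -/
/-! At the first candidate `β ^ (m + 1) • e₀` of a new row, the reference point has `β ^ (m + 1)` in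
coordinate `0` and, from the row just completed, `β ^ m` in each of the other `k - 1` coordinates
(`β ≥ 1` makes later rows dominate earlier ones). The regret is therefore `λ (k - 1) β ^ m`, which is
`β ^ (m + 1)`, exactly the value of the candidate. -/

open Finset

noncomputable def norm1 {k : ℕ} (v : Fin k → ℝ) : ℝ := ∑ j, v j

noncomputable def superCand {n k : ℕ} (σ : Fin n → Fin k → ℝ) (t : Fin n) (j : Fin k) : ℝ :=
  (Finset.Iic t).sup' ⟨t, Finset.mem_Iic.2 le_rfl⟩ (fun w => σ w j)

noncomputable def biasedU {n k : ℕ} (lam : ℝ) (σ : Fin n → Fin k → ℝ) (t : Fin n) : ℝ :=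
  norm1 (σ t) - lam * (norm1 (fun j => superCand σ t j) - norm1 (σ t))

theorem superCand_eq_of_le_of_mem {n k : ℕ} {σ : Fin n → Fin k → ℝ} {t : Fin n} {j : Fin k}
    {a : ℝ} (hle : ∀ w ≤ t, σ w j ≤ a) {w₀ : Fin n} (hw₀ : w₀ ≤ t) (ha : σ w₀ j = a) :
    superCand σ t j = a :=
  le_antisymm (Finset.sup'_le _ _ fun w hw => hle w (mem_Iic.1 hw))
    (ha ▸ Finset.le_sup' (fun w => σ w j) (mem_Iic.2 hw₀))

theorem Fin.sum_ite_val_eq_zero {k : ℕ} (hk : 0 < k) (a b : ℝ) :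
    ∑ j : Fin k, (if (j : ℕ) = 0 then a else b) = a + ((k : ℝ) - 1) * b := by
  obtain ⟨k, rfl⟩ := Nat.exists_eq_add_of_lt hk
  simp [Fin.sum_univ_succ]

-- Candidate `q * k + j` is `β ^ q` times the `j`-th unit vector: the candidates fill a table with
-- `k` columns row by row, row `q` carrying the value `β ^ q`.
noncomputable def staircase (n k : ℕ) (β : ℝ) (t : Fin n) (j : Fin k) : ℝ :=
  if (j : ℕ) = (t : ℕ) % k then β ^ ((t : ℕ) / k) else 0

section Staircase

variable {n k : ℕ} {β : ℝ}

theorem staircase_of_val_eq {w : Fin n} {j : Fin k} {q : ℕ} (hw : (w : ℕ) = q * k + j) :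
    staircase n k β w j = β ^ q := by
  have hj := j.isLt
  have hmod : (w : ℕ) % k = j := by rw [hw, Nat.mul_add_mod_self_right, Nat.mod_eq_of_lt hj]
  have hdiv : (w : ℕ) / k = q := by
    rw [hw, Nat.mul_comm, Nat.mul_add_div j.pos, Nat.div_eq_of_lt hj, Nat.add_zero]
  simp [staircase, hmod, hdiv]

theorem staircase_le_pow (hβ : 1 ≤ β) {w : Fin n} {j : Fin k} {q : ℕ}
    (hw : (w : ℕ) % k = j → (w : ℕ) < (q + 1) * k) : staircase n k β w j ≤ β ^ q := by
  unfold staircase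
  split_ifs with h
  · exact pow_le_pow_right₀ hβ (Nat.lt_succ_iff.1 ((Nat.div_lt_iff_lt_mul j.pos).2 (hw h.symm)))
  · positivity

theorem staircase_rowStart {m : ℕ} (ht : (m + 1) * k < n) (j : Fin k) :
    staircase n k β ⟨(m + 1) * k, ht⟩ j = if (j : ℕ) = 0 then β ^ (m + 1) else 0 := by
  simp [staircase, Nat.mul_div_cancel _ j.pos]

theorem superCand_staircase_rowStart (hβ : 1 ≤ β) {m : ℕ} (ht : (m + 1) * k < n) (j : Fin k) :
    superCand (staircase n k β) ⟨(m + 1) * k, ht⟩ j =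
      if (j : ℕ) = 0 then β ^ (m + 1) else β ^ m := by
  have hk := j.pos
  split_ifs with hj
  · refine superCand_eq_of_le_of_mem (fun w hw => staircase_le_pow hβ fun _ => ?_) le_rfl
      (staircase_of_val_eq (by simp [hj]))
    have : (w : ℕ) ≤ (m + 1) * k := hw
    nlinarith
  · have hwit : m * k + j < (m + 1) * k := by nlinarith [j.isLt]
    refine superCand_eq_of_le_of_mem (fun w hw => staircase_le_pow hβ fun hwj => ?_)
      (w₀ := ⟨m * k + j, hwit.trans ht⟩) (Fin.le_def.2 hwit.le) (staircase_of_val_eq rfl)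
    refine lt_of_le_of_ne (Fin.le_def.1 hw) fun heq => hj ?_
    simpa [heq] using hwj.symm

end Staircase

theorem stmt0_general (n k : ℕ) (lam : ℝ) (hk : 1 ≤ k)
    (hβ : 1 < lam * ((k : ℝ) - 1))
    (σ : Fin n → Fin k → ℝ)
    (hσ : ∀ (t : Fin n) (j : Fin k), σ t j =
      if (j : ℕ) = (t : ℕ) % k then (lam * ((k : ℝ) - 1)) ^ ((t : ℕ) / k) else 0)
    (i : ℕ) (hi : 2 ≤ i) (ht : (i - 1) * k < n) :
    biasedU lam σ ⟨(i - 1) * k, ht⟩ = 0 := by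
  obtain rfl : σ = staircase n k (lam * ((k : ℝ) - 1)) := funext fun t => funext (hσ t)
  obtain ⟨m, hm⟩ : ∃ m, i - 1 = m + 1 := ⟨i - 2, by omega⟩
  simp only [hm] at ht ⊢
  simp only [biasedU, norm1, staircase_rowStart, superCand_staircase_rowStart hβ.le,
    Fin.sum_ite_val_eq_zero hk]
  ring

theorem stmt0 (n k : ℕ) (lam : ℝ) (hk : 1 ≤ k) (hlam : 0 ≤ lam)
    (hβ : 1 < lam * ((k : ℝ) - 1))
    (σ : Fin n → Fin k → ℝ)
    (hσ : ∀ (t : Fin n) (j : Fin k), σ t j =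
      if (j : ℕ) = (t : ℕ) % k then (lam * ((k : ℝ) - 1)) ^ ((t : ℕ) / k) else 0)
    (i : ℕ) (hi : 2 ≤ i) (ht : (i - 1) * k < n) :
    biasedU lam σ ⟨(i - 1) * k, ht⟩ = 0 :=
  stmt0_general n k lam hk hβ σ hσ i hi ht
end

section
/- Let k ≥ 2, λ ≥ 0 with λ·(k−1) = 1. Consider the deterministic sequence of n candidates in ℝ^k where the t-th candidate has value ⌈t/k⌉ in coordinate (t mod k) and 0 elsewhere. Then for every candidate index t, the biased gambler's utility U(σ,t) = ‖σ^(t)‖₁ − λ·(‖s^(t)‖₁ − ‖σ^(t)‖₁) is at most 1, while the maximum candidate value max_t ‖σ^(t)‖₁ is at least n/k. -/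
open Finset

/-!
Candidate `t` has the single nonzero entry `t / k + 1`, in coordinate `t % k`. In coordinate `j`
the super candidate is at least the number of indices `w ≤ t` with `w % k = j`: the latest such
`w` has value at least `⌊w / k⌋ + 1`, and `w' ↦ ⌊w' / k⌋` is injective on a residue class.
Summing over `j` gives `‖s^(t)‖₁ ≥ t + 1`, which for `λ (k - 1) = 1` is exactly `U(σ, t) ≤ 1`.
-/

noncomputable def cyclicCand (n k : ℕ) (t : Fin n) (j : Fin k) : ℝ :=
  if (j : ℕ) = (t : ℕ) % k then ((t : ℕ) / k + 1 : ℝ) else 0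

lemma le_superCand {n k : ℕ} (σ : Fin n → Fin k → ℝ) {w t : Fin n} (hwt : w ≤ t) (j : Fin k) :
    σ w j ≤ superCand σ t j :=
  le_sup' (fun w => σ w j) (mem_Iic.2 hwt)

lemma biasedU_le_one {n k : ℕ} {lam c a : ℝ} (hlam : 0 ≤ lam) (hβ : lam * (c - 1) = 1)
    (σ : Fin n → Fin k → ℝ) (t : Fin n) (hσt : norm1 (σ t) = a + 1)
    (hs : c * a + 1 ≤ norm1 (superCand σ t)) :
    biasedU lam σ t ≤ 1 := by
  have hgap : a * (c - 1) ≤ norm1 (superCand σ t) - norm1 (σ t) := by rw [hσt]; linarith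
  have : a ≤ lam * (norm1 (superCand σ t) - norm1 (σ t)) :=
    calc a = lam * (a * (c - 1)) := by linear_combination -a * hβ
      _ ≤ _ := mul_le_mul_of_nonneg_left hgap hlam
  unfold biasedU
  rw [hσt] at this ⊢
  linarith

namespace cyclicCand

variable {n k : ℕ}

lemma nonneg (t : Fin n) (j : Fin k) : 0 ≤ cyclicCand n k t j := by
  unfold cyclicCand
  split_ifs <;> positivity

lemma norm1_eq (hk : 0 < k) (t : Fin n) :
    norm1 (cyclicCand n k t) = (t : ℝ) / k + 1 := by
  unfold norm1 cyclicCand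
  simp_rw [← Fin.ext_iff (b := ⟨(t : ℕ) % k, Nat.mod_lt _ hk⟩)]
  simp

lemma card_residue_le_superCand (t : Fin n) (j : Fin k) :
    (#{w ∈ Iic t | ((w : Fin n) : ℕ) % k = j} : ℝ) ≤ superCand (cyclicCand n k) t j := by
  set F := {w ∈ Iic t | ((w : Fin n) : ℕ) % k = j}
  rcases F.eq_empty_or_nonempty with hF | hF
  · rw [hF, card_empty, Nat.cast_zero]
    exact (nonneg t j).trans (le_superCand _ le_rfl j)
  obtain ⟨hw₀t, hw₀j⟩ := mem_filter.1 (F.max'_mem hF)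
  set w₀ := F.max' hF
  have hcard : #F ≤ (w₀ : ℕ) / k + 1 := by
    refine (card_le_card_of_injOn (fun w : Fin n => (w : ℕ) / k) (t := range ((w₀ : ℕ) / k + 1))
      ?_ ?_).trans_eq (card_range _)
    · intro w hw
      exact mem_range.2 (Nat.lt_succ_of_le (Nat.div_le_div_right (F.le_max' w hw)))
    · intro w hw w' hw' hdiv
      have hmod : (w : ℕ) % k = (w' : ℕ) % k := by
        rw [(mem_filter.1 hw).2, (mem_filter.1 hw').2]
      exact Fin.ext <| by
        rw [← Nat.div_add_mod w k, ← Nat.div_add_mod w' k, hmod, show (w : ℕ) / k = w' / k from hdiv]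
  calc (#F : ℝ) ≤ (((w₀ : ℕ) / k : ℕ) : ℝ) + 1 := by exact_mod_cast hcard
    _ ≤ (w₀ : ℝ) / k + 1 := by gcongr; exact Nat.cast_div_le
    _ = cyclicCand n k w₀ j := by rw [cyclicCand, if_pos hw₀j.symm]
    _ ≤ superCand (cyclicCand n k) t j := le_superCand _ (mem_Iic.1 hw₀t) j

lemma add_one_le_norm1_superCand (hk : 0 < k) (t : Fin n) :
    (t : ℝ) + 1 ≤ norm1 (superCand (cyclicCand n k) t) := by
  have hfib := card_eq_sum_card_fiberwise (s := Iic t) (t := univ)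
    (f := fun w : Fin n => (⟨(w : ℕ) % k, Nat.mod_lt _ hk⟩ : Fin k)) (fun _ _ => mem_univ _)
  simp only [Fin.card_Iic, Fin.ext_iff] at hfib
  calc (t : ℝ) + 1 = ∑ j : Fin k, (#{w ∈ Iic t | ((w : Fin n) : ℕ) % k = j} : ℝ) := by
        exact_mod_cast hfib
    _ ≤ norm1 (superCand (cyclicCand n k) t) :=
        sum_le_sum fun j _ => card_residue_le_superCand t j

end cyclicCand

theorem stmt1 (n k : ℕ) (lam : ℝ) (hk : 2 ≤ k) (hlam : 0 ≤ lam)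
    (hβ : lam * ((k : ℝ) - 1) = 1)
    (σ : Fin n → Fin k → ℝ)
    (hσ : ∀ (t : Fin n) (j : Fin k), σ t j =
      if (j : ℕ) = (t : ℕ) % k then ((t : ℕ) / k + 1 : ℝ) else 0)
    (hn : 0 < n) :
    (∀ t, biasedU lam σ t ≤ 1) ∧ (∃ t, (n : ℝ) / k ≤ norm1 (σ t)) := by
  obtain rfl : σ = cyclicCand n k := funext fun t => funext (hσ t)
  have hk₀ : 0 < k := by omega
  refine ⟨fun t => ?_, ⟨⟨n - 1, by omega⟩, ?_⟩⟩
  · refine biasedU_le_one hlam hβ _ t (cyclicCand.norm1_eq hk₀ t) ?_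
    rw [mul_div_cancel₀ _ (by positivity)]
    exact cyclicCand.add_one_le_norm1_superCand hk₀ t
  · have hk₁ : 1 / (k : ℝ) ≤ 1 := div_le_one_of_le₀ (by exact_mod_cast hk₀) (by positivity)
    rw [cyclicCand.norm1_eq hk₀, Fin.val_mk, Nat.cast_pred hn, sub_div]
    linarith
end

section
/- Consider the sequence of 2m candidates in ℝ² given by (2^j, 0), (0, 2^j) for j = 0, 1, ..., m−1, in that order (alternating), with loss-aversion parameter λ = 2. Then the biased gambler's utility from selecting the first candidate is 1, and the utility from selecting any other candidate is at most 0, while the maximum candidate value is 2^(m−1). -/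
open Finset

/-! The super candidate at time `t ≥ 1` has coordinates `2 ^ (t / 2)` and `2 ^ ((t - 1) / 2)`,
while candidate `t` is worth `2 ^ (t / 2)`; with `λ = 2` the regret `2 · 2 ^ ((t - 1) / 2)`
therefore cancels the gain. Only at `t = 0` is there nothing to regret. -/

lemma norm1_fin_two (v : Fin 2 → ℝ) : norm1 v = v 0 + v 1 := Fin.sum_univ_two v

lemma superCand_eq_of_isGreatest {n k : ℕ} (σ : Fin n → Fin k → ℝ) {t w₀ : Fin n} {j : Fin k}
    (hw₀ : w₀ ≤ t) (hmax : ∀ w ≤ t, σ w j ≤ σ w₀ j) : superCand σ t j = σ w₀ j :=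
  le_antisymm (Finset.sup'_le _ _ fun w hw => hmax w (Finset.mem_Iic.1 hw))
    (Finset.le_sup' (fun w => σ w j) (Finset.mem_Iic.2 hw₀))

lemma biasedU_of_forall_le_eq {n k : ℕ} (lam : ℝ) (σ : Fin n → Fin k → ℝ) {t : Fin n}
    (ht : ∀ w ≤ t, w = t) : biasedU lam σ t = norm1 (σ t) := by
  have hsuper : (fun j => superCand σ t j) = σ t := funext fun j =>
    superCand_eq_of_isGreatest σ le_rfl fun w hw => (congrArg (σ · j) (ht w hw)).le
  simp [biasedU, hsuper]

def IsAlternatingDoubling {n : ℕ} (σ : Fin n → Fin 2 → ℝ) : Prop :=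
  ∀ t j, σ t j = if (j : ℕ) = (t : ℕ) % 2 then (2 : ℝ) ^ ((t : ℕ) / 2) else 0

section Alternating

variable {n : ℕ} {σ : Fin n → Fin 2 → ℝ}

lemma norm1_alternating (hσ : IsAlternatingDoubling σ)
    (t : Fin n) : norm1 (σ t) = 2 ^ ((t : ℕ) / 2) := by
  rw [norm1_fin_two, hσ, hσ]
  rcases Nat.mod_two_eq_zero_or_one (t : ℕ) with h | h <;> simp [h]

/-- The maximum is attained at the last candidate `w₀ ≤ t` pointing in direction `j`. -/
lemma superCand_alternating (hσ : IsAlternatingDoubling σ)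
    {t : Fin n} {j : Fin 2} (hjt : (j : ℕ) ≤ t) :
    superCand σ t j = 2 ^ (((t : ℕ) - j) / 2) := by
  have hj := j.isLt
  let w₀ : Fin n := ⟨t - ((t : ℕ) - j) % 2, by omega⟩
  have hw₀_val : (w₀ : ℕ) = t - ((t : ℕ) - j) % 2 := rfl
  have hw₀ : σ w₀ j = 2 ^ (((t : ℕ) - j) / 2) := by
    rw [hσ, if_pos (by omega)]
    congr 1
    omega
  rw [superCand_eq_of_isGreatest σ (w₀ := w₀) (Fin.le_def.2 (by omega)), hw₀]
  intro w hw
  rw [hσ, hw₀]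
  split_ifs with hwj
  · exact pow_le_pow_right₀ one_le_two (by have := Fin.le_def.1 hw; omega)
  · positivity

end Alternating

theorem stmt2 (m : ℕ) (hm : 1 ≤ m)
    (σ : Fin (2 * m) → Fin 2 → ℝ)
    (hσ : ∀ (t : Fin (2 * m)) (j : Fin 2), σ t j =
      if (j : ℕ) = (t : ℕ) % 2 then (2 : ℝ) ^ ((t : ℕ) / 2) else 0) :
    biasedU 2 σ ⟨0, by omega⟩ = 1 ∧
    (∀ t, t ≠ (⟨0, by omega⟩ : Fin (2 * m)) → biasedU 2 σ t ≤ 0) ∧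
    (∀ t, norm1 (σ t) ≤ (2 : ℝ) ^ (m - 1)) ∧
    (∃ t, norm1 (σ t) = (2 : ℝ) ^ (m - 1)) := by
  refine ⟨?_, fun t ht => ?_, fun t => ?_, ⟨⟨2 * m - 1, by omega⟩, ?_⟩⟩
  · rw [biasedU_of_forall_le_eq _ _ fun w hw => Fin.ext (by have := Fin.le_def.1 hw; simp_all),
      norm1_alternating hσ]
    simp
  · have ht₁ : 1 ≤ (t : ℕ) := Nat.one_le_iff_ne_zero.2 fun h => ht (Fin.ext h)
    have hregret : (2 : ℝ) ^ ((t : ℕ) / 2) ≤ 2 * 2 ^ (((t : ℕ) - 1) / 2) := by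
      rw [← pow_succ']
      exact pow_le_pow_right₀ one_le_two (by omega)
    rw [biasedU, norm1_fin_two fun j => superCand σ t j, superCand_alternating hσ (Nat.zero_le _),
      superCand_alternating hσ ht₁, norm1_alternating hσ]
    simp only [Fin.val_zero, Fin.val_one, Nat.sub_zero]
    linarith
  · rw [norm1_alternating hσ]
    exact pow_le_pow_right₀ one_le_two (by omega)
  · rw [norm1_alternating hσ]
    congr 1
    simp only
    omega
end

section
/- Let σ be a sequence of candidates in ℝ^k with nonnegative entries, let T ≥ 0, let λ ≥ 0 with λ·(k−1) < 1, and let t be the smallest index with ‖σ^(t)‖₁ ≥ T. Then the biased gambler's utility at time t satisfies U(σ,t) ≥ ‖σ^(t)‖₁ − λ·(k−1)·T. -/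
open Finset

/-!
Every earlier candidate has ℓ¹-norm below `T`, so each of its coordinates is below `T`, and the
super candidate at the stopping time `t` is bounded coordinatewise by `max (σ t j) T`.
Since `max a T + min a T = a + T`, it remains to see that `∑ j, min (σ t j) T ≥ T`: either some
coordinate reaches `T`, or all of them are below `T` and the sum is `‖σ t‖₁ ≥ T`.
This gives `‖s t‖₁ ≤ ‖σ t‖₁ + (k - 1) T`, and multiplying by `λ ≥ 0` gives the bound on the utility.
-/

section SumMinMax

variable {ι : Type*} [Fintype ι] {x : ι → ℝ} {T : ℝ}

theorem le_sum_min_of_le_sum (hx : ∀ j, 0 ≤ x j) (hT : 0 ≤ T) (hsum : T ≤ ∑ j, x j) :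
    T ≤ ∑ j, min (x j) T := by
  by_cases hreach : ∃ i, T ≤ x i
  · obtain ⟨i, hi⟩ := hreach
    calc T = min (x i) T := (min_eq_right hi).symm
      _ ≤ ∑ j, min (x j) T :=
        single_le_sum (fun j _ => le_min (hx j) hT) (mem_univ i)
  · push Not at hreach
    simpa only [min_eq_left (hreach _).le] using hsum

theorem sum_max_le_sum_add (hx : ∀ j, 0 ≤ x j) (hT : 0 ≤ T) (hsum : T ≤ ∑ j, x j) :
    ∑ j, max (x j) T ≤ ∑ j, x j + ((Fintype.card ι : ℝ) - 1) * T := by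
  have hmaxmin : ∑ j, max (x j) T + ∑ j, min (x j) T = ∑ j, x j + Fintype.card ι * T := by
    rw [← sum_add_distrib]
    simp only [max_add_min, sum_add_distrib, sum_const, card_univ, nsmul_eq_mul]
  linarith [le_sum_min_of_le_sum hx hT hsum]

end SumMinMax

theorem le_norm1 {k : ℕ} {v : Fin k → ℝ} (hv : ∀ j, 0 ≤ v j) (j : Fin k) : v j ≤ norm1 v :=
  single_le_sum (fun i _ => hv i) (mem_univ j)

theorem superCand_le_max {n k : ℕ} {σ : Fin n → Fin k → ℝ} {T : ℝ} (hpos : ∀ t j, 0 ≤ σ t j)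
    {t : Fin n} (hbefore : ∀ i : Fin n, i < t → norm1 (σ i) < T) (j : Fin k) :
    superCand σ t j ≤ max (σ t j) T := by
  refine sup'_le _ _ fun w hw => ?_
  rcases (mem_Iic.1 hw).lt_or_eq with hlt | rfl
  · exact ((le_norm1 (hpos w) j).trans (hbefore w hlt).le).trans (le_max_right _ _)
  · exact le_max_left _ _

theorem norm1_superCand_le {n k : ℕ} {σ : Fin n → Fin k → ℝ} {T : ℝ} (hT : 0 ≤ T)
    (hpos : ∀ t j, 0 ≤ σ t j) {t : Fin n} (hbefore : ∀ i : Fin n, i < t → norm1 (σ i) < T)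
    (hat : T ≤ norm1 (σ t)) :
    norm1 (fun j => superCand σ t j) ≤ norm1 (σ t) + ((k : ℝ) - 1) * T := by
  calc norm1 (fun j => superCand σ t j)
      ≤ ∑ j, max (σ t j) T := sum_le_sum fun j _ => superCand_le_max hpos hbefore j
    _ ≤ norm1 (σ t) + ((k : ℝ) - 1) * T := by
      simpa only [norm1, Fintype.card_fin] using sum_max_le_sum_add (hpos t) hT hat

theorem stmt3_general (n k : ℕ) (lam T : ℝ) (hlam : 0 ≤ lam)
    (hT : 0 ≤ T)
    (σ : Fin n → Fin k → ℝ) (hpos : ∀ t j, 0 ≤ σ t j)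
    (t : Fin n) (hbefore : ∀ i : Fin n, i < t → norm1 (σ i) < T)
    (hat : T ≤ norm1 (σ t)) :
    norm1 (σ t) - lam * ((k : ℝ) - 1) * T ≤ biasedU lam σ t := by
  have hsuper := norm1_superCand_le hT hpos hbefore hat
  have hpenalty : lam * (norm1 (fun j => superCand σ t j) - norm1 (σ t)) ≤
      lam * (((k : ℝ) - 1) * T) :=
    mul_le_mul_of_nonneg_left (by linarith) hlam
  unfold biasedU
  linarith

theorem stmt3 (n k : ℕ) (lam T : ℝ) (hlam : 0 ≤ lam)
    (hfab : lam * ((k : ℝ) - 1) < 1) (hT : 0 ≤ T)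
    (σ : Fin n → Fin k → ℝ) (hpos : ∀ t j, 0 ≤ σ t j)
    (t : Fin n) (hbefore : ∀ i : Fin n, i < t → norm1 (σ i) < T)
    (hat : T ≤ norm1 (σ t)) :
    norm1 (σ t) - lam * ((k : ℝ) - 1) * T ≤ biasedU lam σ t :=
  stmt3_general n k lam T hlam hT σ hpos t hbefore hat
end
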